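/- arXiv:2211.13215 — 3 statements merged into one kernel-verified Lean document; each statement's English description precedes it below -/
import Mathlib

section
/- Let (a_{n,x}) be a family of complex numbers indexed by positive integers n and reals x. Then the limits lim_{x→∞} x^{-1} ∑_{n<x} a_{n,x} · L(n,z) exist for all real z if and only if the limits lim_{x→∞} x^{-1} ∑_{n<x/q} a_{qn,x} exist for all positive integers q. -/
open Filter Finset

/-- The Liouville function: completely multiplicative with `λ p = -1` for every prime. -/
noncomputable def liouville (n : ℕ) : ℤ := (-1) ^ (ArithmeticFunction.cardFactors n)

/-- `L(n,z) = ∑_{d ∣ n, d < z} λ(d)`. -/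
noncomputable def liouvilleDivisorSum (n : ℕ) (z : ℝ) : ℤ :=
  ∑ d ∈ n.divisors.filter (fun d : ℕ => (d : ℝ) < z), liouville d

lemma key_identity (a : ℕ → ℝ → ℂ) (x z : ℝ) :
    (x : ℂ)⁻¹ * ∑ n ∈ Finset.Ioo 0 ⌈x⌉₊, a n x * (liouvilleDivisorSum n z : ℂ)
  = ∑ d ∈ Finset.Ioo 0 ⌈z⌉₊, (liouville d : ℂ) *
      ((x : ℂ)⁻¹ * ∑ m ∈ Finset.Ioo 0 ⌈x / (d : ℝ)⌉₊, a (d * m) x) := by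
  have h : ∑ n ∈ Finset.Ioo 0 ⌈x⌉₊, a n x * (liouvilleDivisorSum n z : ℂ)
      = ∑ d ∈ Finset.Ioo 0 ⌈z⌉₊, ∑ m ∈ Finset.Ioo 0 ⌈x / (d : ℝ)⌉₊,
          (liouville d : ℂ) * a (d * m) x := by
    simp only [liouvilleDivisorSum, Int.cast_sum, Finset.mul_sum]
    rw [Finset.sum_sigma', Finset.sum_sigma']
    refine Finset.sum_nbij' (fun p => ⟨p.2, p.1 / p.2⟩) (fun p => ⟨p.1 * p.2, p.1⟩)
      ?_ ?_ ?_ ?_ ?_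
    · rintro ⟨n, d⟩ hp
      simp only [Finset.mem_sigma, Finset.mem_Ioo, Finset.mem_filter, Nat.mem_divisors] at hp ⊢
      obtain ⟨⟨hn0, hnx⟩, ⟨hdn, hn0'⟩, hdz⟩ := hp
      have hd0 : 0 < d := Nat.pos_of_mem_divisors (Nat.mem_divisors.2 ⟨hdn, hn0'⟩)
      have hd0' : (0 : ℝ) < d := by exact_mod_cast hd0
      refine ⟨⟨hd0, Nat.lt_ceil.2 hdz⟩, Nat.div_pos (Nat.le_of_dvd hn0 hdn) hd0, Nat.lt_ceil.2 ?_⟩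
      rw [Nat.cast_div hdn (by exact_mod_cast hd0.ne')]
      have hnx' : (n : ℝ) < x := Nat.lt_ceil.1 hnx
      gcongr
    · rintro ⟨d, m⟩ hp
      simp only [Finset.mem_sigma, Finset.mem_Ioo, Finset.mem_filter, Nat.mem_divisors] at hp ⊢
      obtain ⟨⟨hd0, hdz⟩, hm0, hmx⟩ := hp
      have hd0' : (0 : ℝ) < d := by exact_mod_cast hd0
      have hmx' : (m : ℝ) < x / d := Nat.lt_ceil.1 hmx
      refine ⟨⟨Nat.mul_pos hd0 hm0, Nat.lt_ceil.2 ?_⟩, ⟨Dvd.intro m rfl, (Nat.mul_pos hd0 hm0).ne'⟩,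
        Nat.lt_ceil.1 hdz⟩
      push_cast
      calc (d : ℝ) * m < d * (x / d) := by gcongr
        _ = x := by field_simp
    · rintro ⟨n, d⟩ hp
      simp only [Finset.mem_sigma, Finset.mem_Ioo, Finset.mem_filter, Nat.mem_divisors] at hp
      obtain ⟨_, ⟨hdn, hn0'⟩, _⟩ := hp
      simp [Nat.mul_div_cancel' hdn]
    · rintro ⟨d, m⟩ hp
      simp only [Finset.mem_sigma, Finset.mem_Ioo] at hp
      simp [Nat.mul_div_cancel_left _ hp.1.1]
    · rintro ⟨n, d⟩ hp
      simp only [Finset.mem_sigma, Finset.mem_Ioo, Finset.mem_filter, Nat.mem_divisors] at hp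
      obtain ⟨_, ⟨hdn, _⟩, _⟩ := hp
      rw [Nat.mul_div_cancel' hdn]
      ring
  rw [h, Finset.mul_sum]
  refine Finset.sum_congr rfl fun d _ => ?_
  rw [Finset.mul_sum, Finset.mul_sum, Finset.mul_sum]
  exact Finset.sum_congr rfl fun m _ => by ring

lemma liouville_mul_self (q : ℕ) : (liouville q : ℂ) * (liouville q : ℂ) = 1 := by
  simp only [liouville]
  push_cast
  rw [← mul_pow]
  norm_num

theorem limits_exist_iff (a : ℕ → ℝ → ℂ) :
    (∀ z : ℝ, ∃ l : ℂ, Tendsto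
      (fun x : ℝ => (x : ℂ)⁻¹ * ∑ n ∈ Finset.Ioo 0 ⌈x⌉₊, a n x * (liouvilleDivisorSum n z : ℂ))
      atTop (nhds l)) ↔
    (∀ q : ℕ, 0 < q → ∃ l : ℂ, Tendsto
      (fun x : ℝ => (x : ℂ)⁻¹ * ∑ n ∈ Finset.Ioo 0 ⌈x / (q : ℝ)⌉₊, a (q * n) x)
      atTop (nhds l)) := by
  set T : ℕ → ℝ → ℂ := fun q x => (x : ℂ)⁻¹ * ∑ n ∈ Finset.Ioo 0 ⌈x / (q : ℝ)⌉₊, a (q * n) x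
    with hT
  constructor
  · intro h q hq
    obtain ⟨l1, hl1⟩ := h (q : ℝ)
    obtain ⟨l2, hl2⟩ := h ((q : ℝ) + 1)
    refine ⟨(liouville q : ℂ) * (l2 - l1), ?_⟩
    have htend := ((hl2.sub hl1).const_mul ((liouville q : ℂ)))
    refine htend.congr fun x => ?_
    rw [key_identity, key_identity]
    have hc1 : ⌈(q : ℝ)⌉₊ = q := Nat.ceil_natCast q
    have hc2 : ⌈(q : ℝ) + 1⌉₊ = q + 1 := by
      rw [show (q : ℝ) + 1 = ((q + 1 : ℕ) : ℝ) by push_cast; ring, Nat.ceil_natCast]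
    rw [hc1, hc2]
    have hins : Finset.Ioo 0 (q + 1) = insert q (Finset.Ioo 0 q) := by
      ext n; simp only [Finset.mem_Ioo, Finset.mem_insert]; omega
    rw [hins, Finset.sum_insert (by simp)]
    rw [mul_comm ((liouville q : ℂ))]
    rw [add_sub_cancel_right, mul_comm, ← mul_assoc, liouville_mul_self, one_mul]
  · intro h z
    have h' : ∀ d : ℕ, ∃ l : ℂ, 0 < d → Tendsto (T d) atTop (nhds l) := by
      intro d
      by_cases hd : 0 < d
      · obtain ⟨l, hl⟩ := h d hd
        exact ⟨l, fun _ => hl⟩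
      · exact ⟨0, fun h' => absurd h' hd⟩
    choose l hl using h'
    refine ⟨∑ d ∈ Finset.Ioo 0 ⌈z⌉₊, (liouville d : ℂ) * l d, ?_⟩
    have htend : Tendsto (fun x => ∑ d ∈ Finset.Ioo 0 ⌈z⌉₊, (liouville d : ℂ) * T d x)
        atTop (nhds (∑ d ∈ Finset.Ioo 0 ⌈z⌉₊, (liouville d : ℂ) * l d)) := by
      refine tendsto_finset_sum _ fun d hd => ?_
      exact (hl d (Finset.mem_Ioo.1 hd).1).const_mul _
    exact htend.congr fun x => (key_identity a x z).symm
end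

section
/- Let (a_{n,x}) be a family of complex numbers with limsup_{x→∞} x^{-1} ∑_{n<x} |a_{n,x}|² < ∞, and suppose that for every positive integer q the limit g(q) := lim_{x→∞} g_x(q) exists, where g_x(q) = ∑_{d|q} μ(q/d) · (d/x) ∑_{n<x/d} a_{dn,x}. Then the series ∑_{q=1}^∞ |g(q)|²/φ(q) converges, where φ is Euler's totient function. -/
/-!
With `c_q` the Ramanujan sums, `g_x(q) = x⁻¹ ∑_{m<x} c_q(m) a_{m,x}` is the inner product of the
vectors `(c_q(m) / √x)_{m<x}` and `(a_{m,x} / √x)_{m<x}`. The former are asymptotically orthogonal,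
`x⁻¹ ∑_{m<x} c_q(m) c_{q'}(m) → [q = q'] φ(q)`, because a pair `d ∣ q`, `e ∣ q'` contributes density
`d e / lcm(d, e) = gcd(d, e)` and `∑_{d ∣ q, e ∣ q'} μ(q/d) μ(q'/e) gcd(d, e) = [q = q'] φ(q)` by
Möbius inversion of `gcd(d, e) = ∑_{t ∣ d, t ∣ e} φ(t)`. Bessel's inequality for finitely many `q`,
passed to the limit `x → ∞`, bounds every partial sum of `∑ |g(q)|² / φ(q)` by the bound on
`x⁻¹ ∑_{n<x} |a_{n,x}|²`.
-/

open Filter Finset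
open scoped InnerProductSpace Topology ComplexConjugate ArithmeticFunction.Moebius
open ArithmeticFunction

section AsymptoticBessel

variable {𝕜 α ι : Type*} [RCLike 𝕜] {l : Filter α} [l.NeBot] {E : α → Type*}
  [∀ x, NormedAddCommGroup (E x)] [∀ x, InnerProductSpace 𝕜 (E x)] [DecidableEq ι]

theorem sum_norm_sq_div_le_of_tendsto_inner (u : ∀ x, E x) (e : ι → ∀ x, E x) (s : Finset ι)
    (φ : ι → ℝ) (g : ι → 𝕜) {C : ℝ} (hu : ∀ᶠ x in l, ‖u x‖ ^ 2 ≤ C)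
    (he : ∀ i ∈ s, ∀ j ∈ s,
      Tendsto (fun x => ⟪e i x, e j x⟫_𝕜) l (𝓝 (if i = j then (φ i : 𝕜) else 0)))
    (hg : ∀ i ∈ s, Tendsto (fun x => ⟪e i x, u x⟫_𝕜) l (𝓝 (g i))) :
    ∑ i ∈ s, ‖g i‖ ^ 2 / φ i ≤ C := by
  set w : ι → 𝕜 := fun i => g i / φ i
  set v : ∀ x, E x := fun x => ∑ i ∈ s, w i • e i x
  set S : ℝ := ∑ i ∈ s, ‖g i‖ ^ 2 / φ i
  have hvu : Tendsto (fun x => ⟪v x, u x⟫_𝕜) l (𝓝 S) := by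
    have hterm : ∀ i, (starRingEnd 𝕜) (w i) * g i = (‖g i‖ ^ 2 / φ i : ℝ) := by
      intro i
      simp only [w, map_div₀, RCLike.conj_ofReal, div_mul_eq_mul_div, RCLike.conj_mul]
      push_cast
      ring
    simp only [v, sum_inner, inner_smul_left, S, RCLike.ofReal_sum, ← hterm]
    exact tendsto_finsetSum _ fun i hi => (hg i hi).const_mul _
  have hvv : Tendsto (fun x => ⟪v x, v x⟫_𝕜) l (𝓝 S) := by
    have hterm : ∀ i ∈ s,
        w i * ∑ j ∈ s, (starRingEnd 𝕜) (w j) * (if j = i then (φ j : 𝕜) else 0)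
          = (‖g i‖ ^ 2 / φ i : ℝ) := by
      intro i hi
      simp only [mul_ite, mul_zero, sum_ite_eq', hi, if_true, w, map_div₀, RCLike.conj_ofReal]
      rcases eq_or_ne (φ i) 0 with h | h
      · simp [h]
      · rw [← mul_assoc, mul_comm (g i / _), div_mul_div_comm, RCLike.conj_mul]
        field_simp
        push_cast
        ring
    simp only [v, sum_inner, inner_sum, inner_smul_left, inner_smul_right, S, RCLike.ofReal_sum]
    rw [← sum_congr rfl hterm]
    exact tendsto_finsetSum _ fun i hi => (tendsto_finsetSum _ fun j hj =>
      (he j hj i hi).const_mul _).const_mul _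
  have hlim : Tendsto (fun x => ‖u x‖ ^ 2 - ‖u x - v x‖ ^ 2) l (𝓝 S) := by
    have hre := (RCLike.continuous_re.tendsto _).comp hvu
    have hnorm := (RCLike.continuous_re.tendsto _).comp hvv
    simp only [Function.comp_def, RCLike.ofReal_re, inner_self_eq_norm_sq] at hre hnorm
    convert (hre.const_mul 2).sub hnorm using 2 with x
    · rw [norm_sub_sq (𝕜 := 𝕜), inner_re_symm]
      ring
    · ring
  refine le_of_tendsto hlim ?_
  filter_upwards [hu] with x hx
  linarith [sq_nonneg ‖u x - v x‖]

end AsymptoticBessel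

section RamanujanSum

variable {R : Type*} [CommRing R]

theorem sum_divisors_moebius_mul_sum_divisors (h : ℕ → R) {n : ℕ}
    (hn : 0 < n) : ∑ d ∈ n.divisors, (μ (n / d) : R) * ∑ t ∈ d.divisors, h t = h n := by
  rw [← Nat.sum_divisorsAntidiagonal' (fun a b => (μ a : R) * ∑ t ∈ b.divisors, h t)]
  exact sum_eq_iff_sum_mul_moebius_eq.1 (fun _ _ => rfl) n hn

theorem gcd_eq_sum_divisors_totient {d : ℕ} (hd : d ≠ 0) (e : ℕ) :
    (Nat.gcd d e : R) = ∑ t ∈ d.divisors, if t ∣ e then (t.totient : R) else 0 := by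
  rw [← sum_filter, ← Nat.sum_totient (Nat.gcd d e), Nat.cast_sum]
  congr 1
  ext t
  simp [Nat.dvd_gcd_iff, hd, Nat.gcd_eq_zero_iff]

theorem sum_moebius_mul_moebius_mul_gcd {q q' : ℕ} (hq : 0 < q) (hq' : 0 < q') :
    ∑ d ∈ q.divisors, ∑ e ∈ q'.divisors, (μ (q / d) * μ (q' / e) * Nat.gcd d e : R)
      = if q = q' then (q.totient : R) else 0 := by
  have hdvd : ∀ e ∈ q'.divisors,
      (if q ∣ e then (q.totient : R) else 0)
        = q.totient * ∑ t ∈ e.divisors, if t = q then 1 else 0 := by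
    intro e he
    simp [Nat.ne_of_gt (Nat.pos_of_mem_divisors he)]
  calc ∑ d ∈ q.divisors, ∑ e ∈ q'.divisors, (μ (q / d) * μ (q' / e) * Nat.gcd d e : R)
      = ∑ e ∈ q'.divisors, (μ (q' / e) : R) * ∑ d ∈ q.divisors,
          (μ (q / d) : R) * ∑ t ∈ d.divisors, if t ∣ e then (t.totient : R) else 0 := by
        rw [sum_comm]
        refine sum_congr rfl fun e _ => ?_
        rw [mul_sum]
        refine sum_congr rfl fun d hd => ?_
        rw [← gcd_eq_sum_divisors_totient (Nat.ne_of_gt (Nat.pos_of_mem_divisors hd))]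
        ring
    _ = q.totient * ∑ e ∈ q'.divisors,
          (μ (q' / e) : R) * ∑ t ∈ e.divisors, if t = q then 1 else 0 := by
        rw [mul_sum]
        refine sum_congr rfl fun e he => ?_
        rw [sum_divisors_moebius_mul_sum_divisors _ hq, hdvd e he]
        ring
    _ = if q = q' then (q.totient : R) else 0 := by
        rw [sum_divisors_moebius_mul_sum_divisors _ hq']
        obtain rfl | h := eq_or_ne q q'
        · simp
        · simp [h, h.symm]

theorem filter_dvd_Ioo_ceil {d : ℕ} (hd : 0 < d) (x : ℝ) :
    {m ∈ Ioo 0 ⌈x⌉₊ | d ∣ m} = (Ioo 0 ⌈x / d⌉₊).image (d * ·) := by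
  have hlt : ∀ n : ℕ, d * n < ⌈x⌉₊ ↔ n < ⌈x / d⌉₊ := fun n => by
    rw [Nat.lt_ceil, Nat.lt_ceil, lt_div_iff₀ (by exact_mod_cast hd), Nat.cast_mul, mul_comm]
  ext m
  simp only [mem_filter, mem_Ioo, mem_image]
  constructor
  · rintro ⟨⟨hm0, hmx⟩, n, rfl⟩
    exact ⟨n, ⟨Nat.pos_of_mul_pos_left hm0, (hlt n).1 hmx⟩, rfl⟩
  · rintro ⟨n, ⟨hn0, hnx⟩, rfl⟩
    exact ⟨⟨Nat.mul_pos hd hn0, (hlt n).2 hnx⟩, dvd_mul_right d n⟩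

theorem tendsto_card_filter_dvd_Ioo_ceil {d : ℕ} (hd : 0 < d) :
    Tendsto (fun x : ℝ => x⁻¹ * #{m ∈ Ioo 0 ⌈x⌉₊ | d ∣ m}) atTop (𝓝 (1 / d)) := by
  have hlim : Tendsto (fun x : ℝ => (⌈(1 / d : ℝ) * x⌉₊ : ℝ) / x - x⁻¹) atTop (𝓝 (1 / d)) := by
    simpa using
      (tendsto_nat_ceil_mul_div_atTop (R := ℝ) (by positivity)).sub tendsto_inv_atTop_zero
  refine hlim.congr' ?_
  filter_upwards [eventually_gt_atTop 0] with x hx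
  have hceil : 1 ≤ ⌈x / d⌉₊ := Nat.one_le_ceil_iff.2 (by positivity)
  rw [filter_dvd_Ioo_ceil hd, card_image_of_injective _ (mul_right_injective₀ hd.ne'),
    Nat.card_Ioo, Nat.sub_zero, Nat.cast_sub hceil, one_div_mul_eq_div]
  field_simp
  push_cast
  ring

/-- The Ramanujan sum `c_q(m)`, through its divisor-sum formula rather than as a sum of primitive
`q`-th roots of unity. -/
def ramanujanSum (q m : ℕ) : ℤ := ∑ d ∈ q.divisors with d ∣ m, μ (q / d) * d

theorem sum_ramanujanSum_mul (q : ℕ) (x : ℝ) (F : ℕ → R) :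
    ∑ m ∈ Ioo 0 ⌈x⌉₊, (ramanujanSum q m : R) * F m
      = ∑ d ∈ q.divisors, (μ (q / d) : R) * (d * ∑ n ∈ Ioo 0 ⌈x / d⌉₊, F (d * n)) := by
  simp only [ramanujanSum, sum_filter, Int.cast_sum, Int.cast_ite, Int.cast_mul, Int.cast_natCast,
    Int.cast_zero, sum_mul, ite_mul, zero_mul]
  rw [sum_comm]
  refine sum_congr rfl fun d hd => ?_
  rw [← sum_filter, filter_dvd_Ioo_ceil (Nat.pos_of_mem_divisors hd),
    sum_image fun _ _ _ _ h => Nat.eq_of_mul_eq_mul_left (Nat.pos_of_mem_divisors hd) h,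
    mul_sum, mul_sum]
  exact sum_congr rfl fun n _ => by ring

theorem sum_ramanujanSum_mul_ramanujanSum (q q' : ℕ) (x : ℝ) :
    ∑ m ∈ Ioo 0 ⌈x⌉₊, (ramanujanSum q m : R) * ramanujanSum q' m
      = ∑ d ∈ q.divisors, ∑ e ∈ q'.divisors,
          (μ (q / d) * d * (μ (q' / e) * e) : R) * #{m ∈ Ioo 0 ⌈x⌉₊ | Nat.lcm d e ∣ m} := by
  simp only [ramanujanSum, sum_filter, Int.cast_sum, Int.cast_ite, Int.cast_mul, Int.cast_natCast,
    Int.cast_zero, sum_mul_sum]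
  rw [sum_comm]
  refine sum_congr rfl fun d _ => ?_
  rw [sum_comm]
  refine sum_congr rfl fun e _ => ?_
  rw [card_eq_sum_ones, sum_filter, Nat.cast_sum, mul_sum]
  refine sum_congr rfl fun m _ => ?_
  by_cases hd : d ∣ m <;> by_cases he : e ∣ m <;> simp [hd, he, Nat.lcm_dvd_iff]

theorem tendsto_inv_mul_sum_ramanujanSum_mul_ramanujanSum {q q' : ℕ} (hq : 0 < q)
    (hq' : 0 < q') :
    Tendsto (fun x : ℝ => x⁻¹ * ∑ m ∈ Ioo 0 ⌈x⌉₊, (ramanujanSum q m : ℝ) * ramanujanSum q' m)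
      atTop (𝓝 (if q = q' then (q.totient : ℝ) else 0)) := by
  simp_rw [sum_ramanujanSum_mul_ramanujanSum, mul_sum]
  rw [← sum_moebius_mul_moebius_mul_gcd hq hq']
  refine tendsto_finsetSum _ fun d hd => tendsto_finsetSum _ fun e he => ?_
  have hd0 := Nat.pos_of_mem_divisors hd
  have he0 := Nat.pos_of_mem_divisors he
  have hgcd : (Nat.gcd d e : ℝ) = d * e * (1 / Nat.lcm d e) := by
    rw [mul_one_div, eq_div_iff (by positivity)]
    exact_mod_cast Nat.gcd_mul_lcm d e
  rw [hgcd]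
  convert (tendsto_card_filter_dvd_Ioo_ceil (Nat.lcm_pos hd0 he0)).const_mul
    ((μ (q / d) * d * (μ (q' / e) * e) : ℝ)) using 2 <;> ring

end RamanujanSum

section TruncatedVec

variable {𝕜 : Type*} [RCLike 𝕜]

noncomputable def truncatedVec (x : ℝ) (f : ℕ → 𝕜) : EuclideanSpace 𝕜 (Ioo 0 ⌈x⌉₊) :=
  WithLp.toLp 2 fun m => (√x⁻¹ : 𝕜) * f m

theorem inner_truncatedVec {x : ℝ} (hx : 0 ≤ x) (f h : ℕ → 𝕜) :
    ⟪truncatedVec x f, truncatedVec x h⟫_𝕜 = x⁻¹ * ∑ m ∈ Ioo 0 ⌈x⌉₊, conj (f m) * h m := by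
  have hsq : (√x⁻¹ : 𝕜) * √x⁻¹ = (x⁻¹ : ℝ) := by
    rw [← RCLike.ofReal_mul, Real.mul_self_sqrt (inv_nonneg.2 hx)]
  simp only [truncatedVec, PiLp.inner_apply, RCLike.inner_apply', map_mul, RCLike.conj_ofReal]
  rw [← sum_coe_sort (Ioo 0 ⌈x⌉₊), mul_sum, ← hsq]
  exact sum_congr rfl fun m _ => by ring

theorem norm_truncatedVec_sq {x : ℝ} (hx : 0 ≤ x) (f : ℕ → 𝕜) :
    ‖truncatedVec x f‖ ^ 2 = x⁻¹ * ∑ m ∈ Ioo 0 ⌈x⌉₊, ‖f m‖ ^ 2 := by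
  simp only [EuclideanSpace.norm_sq_eq, truncatedVec, norm_mul, mul_pow,
    RCLike.norm_ofReal, sq_abs, Real.sq_sqrt (inv_nonneg.2 hx)]
  rw [← sum_coe_sort (Ioo 0 ⌈x⌉₊), mul_sum]

theorem inner_truncatedVec_ramanujanSum {x : ℝ} (hx : 0 ≤ x) (q : ℕ) (f : ℕ → 𝕜) :
    ⟪truncatedVec x (fun m => (ramanujanSum q m : 𝕜)), truncatedVec x f⟫_𝕜
      = ∑ d ∈ q.divisors, (μ (q / d) : 𝕜) * ((d : 𝕜) / x * ∑ n ∈ Ioo 0 ⌈x / d⌉₊, f (d * n)) := by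
  simp only [inner_truncatedVec hx, map_intCast, sum_ramanujanSum_mul, mul_sum]
  refine sum_congr rfl fun d _ => sum_congr rfl fun n _ => ?_
  push_cast
  ring

theorem tendsto_inner_truncatedVec_ramanujanSum {q q' : ℕ} (hq : 0 < q) (hq' : 0 < q') :
    Tendsto (fun x => ⟪truncatedVec x (fun m => (ramanujanSum q m : 𝕜)),
      truncatedVec x (fun m => (ramanujanSum q' m : 𝕜))⟫_𝕜)
      atTop (𝓝 (if q = q' then (q.totient : 𝕜) else 0)) := by
  have hlim := ((RCLike.continuous_ofReal (K := 𝕜)).tendsto _).comp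
    (tendsto_inv_mul_sum_ramanujanSum_mul_ramanujanSum hq hq')
  rw [apply_ite ((↑) : ℝ → 𝕜), RCLike.ofReal_natCast, RCLike.ofReal_zero] at hlim
  refine hlim.congr' ?_
  filter_upwards [eventually_ge_atTop 0] with x hx
  simp only [Function.comp_apply, inner_truncatedVec hx, map_intCast]
  push_cast
  rfl

end TruncatedVec

theorem summable_g_sq_div_totient (a : ℕ → ℝ → ℂ) (g : ℕ → ℂ)
    (hbound : IsBoundedUnder (· ≤ ·) atTop
      (fun x : ℝ => x⁻¹ * ∑ n ∈ Finset.Ioo 0 ⌈x⌉₊, ‖a n x‖ ^ 2))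
    (hg : ∀ q : ℕ, 0 < q → Tendsto
      (fun x : ℝ => ∑ d ∈ q.divisors, (ArithmeticFunction.moebius (q / d) : ℂ) *
        ((d : ℂ) / (x : ℂ) * ∑ n ∈ Finset.Ioo 0 ⌈x / (d : ℝ)⌉₊, a (d * n) x))
      atTop (nhds (g q))) :
    Summable (fun q : ℕ => ‖g (q + 1)‖ ^ 2 / (Nat.totient (q + 1) : ℝ)) := by
  obtain ⟨C, hC⟩ := hbound
  refine summable_of_sum_range_le (c := C) (fun _ => by positivity) fun N => ?_
  refine sum_norm_sq_div_le_of_tendsto_inner (l := atTop) (fun x => truncatedVec x (a · x))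
    (fun q x => truncatedVec x fun m => (ramanujanSum (q + 1) m : ℂ)) (range N)
    (fun q => (Nat.totient (q + 1) : ℝ)) (fun q => g (q + 1)) ?_ ?_ ?_
  · filter_upwards [eventually_map.1 hC, eventually_ge_atTop 0] with x hCx hx
    rwa [norm_truncatedVec_sq hx]
  · intro q _ q' _
    simpa using tendsto_inner_truncatedVec_ramanujanSum (𝕜 := ℂ) q.succ_pos q'.succ_pos
  · intro q _
    refine (hg (q + 1) q.succ_pos).congr' ?_
    filter_upwards [eventually_ge_atTop 0] with x hx
    rw [inner_truncatedVec_ramanujanSum hx]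
    -- the sides differ only in the instance paths of the casts to `ℂ`
    congr!
end

section
/- Let g : ℕ → ℂ be a function such that the series ∑_{q=1}^∞ |g(q)|²/φ(q) converges, where φ is Euler's totient function. Then ∑_{q<z} |g(q)|/(q · log*(z/q)) tends to 0 as z → ∞, where log*(t) = max(1, log t) and the sum runs over positive integers q with q < z. -/
open Filter Finset Topology

/-!
Fix a cut-off `Q`. Each of the finitely many terms with `q < Q` tends to `0`, because
`log*(z/q) → ∞`. For `Q ≤ q < z`, Cauchy–Schwarz together with `φ q ≤ q` bounds the sum by
`(∑_{q ≥ Q} |g q|² / φ q)^{1/2} (∑_{q < z} 1 / (q log*(z/q)²))^{1/2}`. The first factor is a tail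
of a convergent series, and the second is bounded uniformly in `z`: each of its terms is
dominated by an increment of the increasing function `q ↦ 1 / (2 + log (z/q))`, so the sum
telescopes; the shift by `2` keeps the denominators at least `1` for all `q ≤ ⌈z⌉`.
-/

noncomputable def logStar (t : ℝ) : ℝ := max 1 (Real.log t)

lemma one_le_logStar (t : ℝ) : 1 ≤ logStar t := le_max_left _ _

lemma log_le_logStar (t : ℝ) : Real.log t ≤ logStar t := le_max_right _ _

lemma tendsto_logStar_atTop : Tendsto logStar atTop atTop :=
  tendsto_atTop_mono log_le_logStar Real.tendsto_log_atTop

lemma tendsto_div_mul_logStar_atTop (c : ℝ) {q : ℕ} (hq : q ≠ 0) :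
    Tendsto (fun z : ℝ => c / (q * logStar (z / q))) atTop (𝓝 0) := by
  have hq₀ : (0 : ℝ) < q := by positivity
  exact tendsto_const_nhds.div_atTop
    ((tendsto_logStar_atTop.comp (tendsto_id.atTop_div_const hq₀)).const_mul_atTop hq₀)

lemma one_le_two_add_log_div_succ {z : ℝ} {q : ℕ} (hq : 1 ≤ q) (hqz : q < z) :
    1 ≤ 2 + Real.log (z / (q + 1)) := by
  have hq1 : (1 : ℝ) ≤ q := by exact_mod_cast hq
  have hz : 0 < z := by linarith
  have hlog := Real.one_sub_inv_le_log_of_pos (x := z / (q + 1)) (by positivity)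
  have : (z / (q + 1))⁻¹ ≤ 2 := by
    rw [inv_div, div_le_iff₀ hz]
    linarith
  linarith

lemma inv_mul_logStar_sq_le {z : ℝ} {q : ℕ} (hq : 1 ≤ q) (hqz : q < z) :
    1 / (q * logStar (z / q) ^ 2)
      ≤ 18 * ((2 + Real.log (z / (q + 1)))⁻¹ - (2 + Real.log (z / q))⁻¹) := by
  have hq1 : (1 : ℝ) ≤ q := by exact_mod_cast hq
  have hz : 0 < z := by linarith
  set L := logStar (z / q)
  set a := Real.log (z / q)
  set b := Real.log (z / (q + 1))
  have hb : 1 ≤ 2 + b := one_le_two_add_log_div_succ hq hqz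
  have hL : 1 ≤ L := one_le_logStar _
  have haL : a ≤ L := log_le_logStar _
  have hab : 1 / (2 * q) ≤ a - b := by
    have hdiff : a - b = Real.log ((q + 1) / q) := by
      rw [← Real.log_div (by positivity) (by positivity)]
      congr 1
      field_simp
    have := Real.one_sub_inv_le_log_of_pos (x := (q + 1) / q) (by positivity)
    rw [hdiff]
    refine le_trans ?_ this
    rw [inv_div, one_sub_div (by positivity), add_sub_cancel_left,
      one_div_le_one_div (by positivity) (by positivity)]
    linarith
  have hba : 0 ≤ a - b := le_trans (by positivity) hab
  have hsub : (2 + b)⁻¹ - (2 + a)⁻¹ = (a - b) / ((2 + a) * (2 + b)) := by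
    rw [inv_sub_inv (by linarith) (by linarith)]
    ring
  have hprod : (2 + a) * (2 + b) ≤ (3 * L) ^ 2 := by
    rw [sq]
    exact mul_le_mul (by linarith) (by linarith) (by linarith) (by linarith)
  rw [hsub]
  calc 1 / (q * L ^ 2) = 18 * (1 / (2 * q) / (3 * L) ^ 2) := by field_simp; ring
    _ ≤ 18 * ((a - b) / ((2 + a) * (2 + b))) := by
        gcongr
        exact mul_pos (by linarith) (by linarith)

lemma sum_inv_mul_logStar_sq_le (z : ℝ) :
    ∑ q ∈ Ico 1 ⌈z⌉₊, 1 / (q * logStar (z / q) ^ 2) ≤ 18 := by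
  rcases Nat.lt_or_ge ⌈z⌉₊ 2 with hn | hn
  · rw [Ico_eq_empty (by omega), sum_empty]
    norm_num
  obtain ⟨m, hm⟩ : ∃ m, ⌈z⌉₊ = m + 1 := ⟨⌈z⌉₊ - 1, by omega⟩
  have hm1 : 1 ≤ m := by omega
  have hmz : (m : ℝ) < z := Nat.lt_ceil.1 (by omega)
  set H : ℕ → ℝ := fun q => (2 + Real.log (z / q))⁻¹
  have hH1 : 0 ≤ H 1 := by
    have : 0 ≤ Real.log z := Real.log_nonneg (by
      have : (1 : ℝ) ≤ m := by exact_mod_cast hm1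
      linarith)
    simp only [H, Nat.cast_one, div_one]
    positivity
  have hHz : H ⌈z⌉₊ ≤ 1 := by
    simp only [H, hm, Nat.cast_succ]
    exact inv_le_one_of_one_le₀ (one_le_two_add_log_div_succ hm1 hmz)
  calc ∑ q ∈ Ico 1 ⌈z⌉₊, 1 / (q * logStar (z / q) ^ 2)
      ≤ ∑ q ∈ Ico 1 ⌈z⌉₊, 18 * (H (q + 1) - H q) := by
        refine sum_le_sum fun q hq => ?_
        rw [mem_Ico] at hq
        simpa [H] using inv_mul_logStar_sq_le hq.1 (Nat.lt_ceil.1 hq.2)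
    _ = 18 * (H ⌈z⌉₊ - H 1) := by rw [← mul_sum, sum_Ico_sub H (by omega)]
    _ ≤ 18 := by linarith

lemma sq_sum_div_mul_logStar_le {z : ℝ} {s : Finset ℕ} (hs : s ⊆ Ico 1 ⌈z⌉₊) (a : ℕ → ℝ) :
    (∑ q ∈ s, a q / (q * logStar (z / q))) ^ 2 ≤ (∑ q ∈ s, a q ^ 2 / q.totient) * 18 := by
  have hpos : ∀ q ∈ Ico 1 ⌈z⌉₊, 0 ≤ 1 / ((q : ℝ) * logStar (z / q) ^ 2) := fun q _ => by
    have := one_le_logStar (z / q)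
    positivity
  calc (∑ q ∈ s, a q / (q * logStar (z / q))) ^ 2
      ≤ (∑ q ∈ s, a q ^ 2 / q.totient) * ∑ q ∈ s, 1 / (q * logStar (z / q) ^ 2) := by
        refine sum_sq_le_sum_mul_sum_of_sq_le_mul s (fun q _ => by positivity)
          (fun q hq => hpos q (hs hq)) fun q hq => ?_
        have hq : 1 ≤ q := (mem_Ico.1 (hs hq)).1
        have hφ : (0 : ℝ) < q.totient := by exact_mod_cast Nat.totient_pos.2 hq
        have hφq : (q.totient : ℝ) ≤ q := by exact_mod_cast q.totient_le
        have hL := one_le_logStar (z / q)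
        calc (a q / (q * logStar (z / q))) ^ 2 = a q ^ 2 / (q * (q * logStar (z / q) ^ 2)) := by
              ring
          _ ≤ a q ^ 2 / (q.totient * (q * logStar (z / q) ^ 2)) := by gcongr
          _ = a q ^ 2 / q.totient * (1 / (q * logStar (z / q) ^ 2)) := by
              rw [div_mul_div_comm, mul_one]
    _ ≤ (∑ q ∈ s, a q ^ 2 / q.totient) * 18 := by
        gcongr
        exact (sum_le_sum_of_subset_of_nonneg hs fun q hq _ => hpos q hq).trans
          (sum_inv_mul_logStar_sq_le z)

lemma sum_Ico_le_tsum_nat_add {u : ℕ → ℝ} (hu : Summable u) (hu0 : ∀ n, 0 ≤ u n) (Q n : ℕ) :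
    ∑ q ∈ Ico Q n, u q ≤ ∑' k, u (k + Q) := by
  rw [sum_Ico_eq_sum_range]
  simp_rw [add_comm Q]
  exact ((summable_nat_add_iff Q).2 hu).sum_le_tsum _ fun k _ => hu0 _

lemma tendsto_zero_of_le_add {α ι : Type*} {l : Filter α} {L : Filter ι} [L.NeBot]
    {f : α → ℝ} {h : ι → α → ℝ} {c : ι → ℝ} (hf : ∀ z, 0 ≤ f z)
    (hh : ∀ Q, Tendsto (h Q) l (𝓝 0)) (hc : Tendsto c L (𝓝 0))
    (hle : ∀ᶠ Q in L, ∀ᶠ z in l, f z ≤ h Q z + c Q) : Tendsto f l (𝓝 0) := by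
  rw [Metric.tendsto_nhds]
  intro ε hε
  obtain ⟨Q, hcQ, hQ⟩ := ((hc.eventually (gt_mem_nhds (half_pos hε))).and hle).exists
  filter_upwards [hQ, (hh Q).eventually (gt_mem_nhds (half_pos hε))] with z hfz hhz
  rw [Real.dist_0_eq_abs, abs_of_nonneg (hf z)]
  linarith

theorem weighted_sum_tendsto_zero (g : ℕ → ℂ)
    (hg : Summable (fun q : ℕ => ‖g (q + 1)‖ ^ 2 / (Nat.totient (q + 1) : ℝ))) :
    Tendsto
      (fun z : ℝ => ∑ q ∈ Finset.Ioo 0 ⌈z⌉₊,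
        ‖g q‖ / ((q : ℝ) * max 1 (Real.log (z / (q : ℝ)))))
      atTop (nhds 0) := by
  change Tendsto (fun z : ℝ => ∑ q ∈ Ioo 0 ⌈z⌉₊, ‖g q‖ / (q * logStar (z / q))) atTop (𝓝 0)
  set u : ℕ → ℝ := fun q => ‖g q‖ ^ 2 / q.totient
  have hu : Summable u := (summable_nat_add_iff 1).1 hg
  refine tendsto_zero_of_le_add
    (h := fun Q z => ∑ q ∈ Ico 1 Q, ‖g q‖ / (q * logStar (z / q)))
    (c := fun Q => √((∑' k, u (k + Q)) * 18))
    (fun z => sum_nonneg fun q _ => div_nonneg (norm_nonneg _)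
      (mul_nonneg q.cast_nonneg (zero_le_one.trans (one_le_logStar _))))
    (fun Q => by
      simpa using tendsto_finsetSum _ fun q hq =>
        tendsto_div_mul_logStar_atTop _ (by simp at hq; omega))
    (by simpa using ((tendsto_sum_nat_add u).mul_const 18).sqrt) ?_
  filter_upwards [eventually_ge_atTop 1] with Q hQ
  filter_upwards [eventually_ge_atTop (Q : ℝ)] with z hz
  have hQz : Q ≤ ⌈z⌉₊ := Nat.cast_le.1 (hz.trans (Nat.le_ceil z))
  rw [← Ico_add_one_left_eq_Ioo, zero_add, ← sum_Ico_consecutive _ hQ hQz]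
  gcongr
  refine (le_abs_self _).trans (Real.abs_le_sqrt ?_)
  calc _ ≤ (∑ q ∈ Ico Q ⌈z⌉₊, u q) * 18 :=
        sq_sum_div_mul_logStar_le (Ico_subset_Ico_left hQ) _
    _ ≤ _ := by
        gcongr
        exact sum_Ico_le_tsum_nat_add hu (fun q => by positivity) Q _
end
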